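/- arXiv:1011.1157 — 2 statements merged into one kernel-verified Lean document; each statement's English description precedes it below -/
import Mathlib

section
/- Let B=(s_1,…,s_l) be an l-block-decomposition of a 3DT-instance of span n, and let i,j,k ∈ {1,…,n} satisfy (a) i<j<k and (b) there exists h0 with s_{h0}<i<j≤t_{h0} or s_{h0}<j<k≤t_{h0}. Then for all h∈{1,…,l}, τ_{i,j,k}^{−1}(s_h) < τ_{i,j,k}^{−1}(t_h); in particular the l-block-decomposition τ_{i,j,k}^{−1}[B] = (τ_{i,j,k}^{−1}(s_1),…,τ_{i,j,k}^{−1}(s_l)) is defined. -/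
/- ----------------------------------------------------------------------
  Common definitions for the formalization of
  "Sorting by Transpositions is Difficult" (Bulteau, Fertin, Rusu).

  Permutations of {0,…,n} are represented as functions ℕ → ℕ that are
  bijections of the set {0,…,n} (everything above n is irrelevant /
  fixed).
---------------------------------------------------------------------- -/

set_option autoImplicit false

/-- The transposition `τ_{i,j,k}`, as a function on `ℕ`
(for `0 < i < j < k ≤ n` it is a permutation of `{0,…,n}`,
fixing everything `≥ k`). Here `q = k + i - j`. -/
def tau (i j k x : ℕ) : ℕ :=
  if x < i then x
  else if x < k + i - j then x + j - i
  else if x < k then x + j - k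
  else x

/-- The inverse transposition `τ_{i,j,k}⁻¹ = τ_{i,k+i-j,k}`. -/
def tauInv (i j k x : ℕ) : ℕ := tau i (k + i - j) k x

def min3 (p q r : ℕ) : ℕ := min p (min q r)

def max3 (p q r : ℕ) : ℕ := max p (max q r)

/-- the middle value of three (pairwise distinct) values -/
def mid3 (p q r : ℕ) : ℕ := p + q + r - min3 p q r - max3 p q r

/-- The triple of positions `(p,q,r)` is *well-ordered*:
one of `p<q<r`, `q<r<p`, `r<p<q` holds. -/
def WellOrdered3 (p q r : ℕ) : Prop :=
  (p < q ∧ q < r) ∨ (q < r ∧ r < p) ∨ (r < p ∧ p < q)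

/-- The transposition `τ[a,b,c,ψ]` associated with a (well-ordered) triple
whose `ψ`-positions are `(p,q,r)`: it is `τ_{i,j,k}` for `(i,j,k)` the
sorted sequence of `(p,q,r)`. -/
def tauStep (p q r x : ℕ) : ℕ := tau (min3 p q r) (mid3 p q r) (max3 p q r) x

/-- the inverse of `τ[a,b,c,ψ]` -/
def tauInvStep (p q r x : ℕ) : ℕ := tauInv (min3 p q r) (mid3 p q r) (max3 p q r) x

/-- the number of breakpoints `d_b(π)` of `π` as a permutation of `{0,…,n}`:
the number of `x ∈ {1,…,n}` such that `(x-1,x)` is not an adjacency,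
i.e. `π x ≠ π (x-1) + 1`. -/
def db (n : ℕ) (π : ℕ → ℕ) : ℕ :=
  ((Finset.Icc 1 n).filter fun x => π x ≠ π (x - 1) + 1).card

/-- a triple `(i,j,k)` of integers coding a transposition of `{0,…,n}` -/
def IsTransp (n : ℕ) (t : ℕ × ℕ × ℕ) : Prop :=
  0 < t.1 ∧ t.1 < t.2.1 ∧ t.2.1 < t.2.2 ∧ t.2.2 ≤ n

/-- `π` can be sorted by `m` transpositions:
there are transpositions `τ_1,…,τ_m` with `π ∘ τ_m ∘ ⋯ ∘ τ_1 = Id` on `{0,…,n}`.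
(`d_t(π)` is the least such `m`.) -/
def SortsIn (n : ℕ) (π : ℕ → ℕ) (m : ℕ) : Prop :=
  ∃ L : List (ℕ × ℕ × ℕ), L.length = m ∧ (∀ t ∈ L, IsTransp n t) ∧
    ∀ x ≤ n, π (L.foldl (fun y t => tau t.1 t.2.1 t.2.2 y) x) = x

/-- the three elements of an ordered triple, as a finite set -/
def trElems {α : Type*} [DecidableEq α] (t : α × α × α) : Finset α := {t.1, t.2.1, t.2.2}

/-- A 3DT-instance `I = ⟨Σ, T, ψ⟩` of span `n`: an alphabet `Sig`,
a set `T` of ordered triples partitioning `Sig`, and an injection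
`ψ : Sig → {1,…,n}`. -/
structure TDT (α : Type*) [DecidableEq α] (n : ℕ) where
  Sig : Finset α
  T : Finset (α × α × α)
  psi : α → ℕ
  mem_T : ∀ t ∈ T, t.1 ∈ Sig ∧ t.2.1 ∈ Sig ∧ t.2.2 ∈ Sig
  cover : ∀ σ ∈ Sig, ∃ t ∈ T, σ ∈ trElems t
  nodup_T : ∀ t ∈ T, t.1 ≠ t.2.1 ∧ t.1 ≠ t.2.2 ∧ t.2.1 ≠ t.2.2
  disj_T : ∀ t ∈ T, ∀ t' ∈ T, t ≠ t' → Disjoint (trElems t) (trElems t')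
  psi_mem : ∀ σ ∈ Sig, psi σ ∈ Finset.Icc 1 n
  psi_inj : Set.InjOn psi ↑Sig

namespace TDT

variable {α : Type*} [DecidableEq α] {n : ℕ}

/-- the domain `L = ψ(Σ)` of a 3DT-instance -/
def dom (I : TDT α n) : Finset ℕ := I.Sig.image I.psi

/-- a triple of `T` is well-ordered -/
def WellOrderedT (I : TDT α n) (t : α × α × α) : Prop :=
  WellOrdered3 (I.psi t.1) (I.psi t.2.1) (I.psi t.2.2)

/-- the transposition `τ[a,b,c,ψ]` associated with a well-ordered triple -/
def tauOf (I : TDT α n) (t : α × α × α) (x : ℕ) : ℕ :=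
  tauStep (I.psi t.1) (I.psi t.2.1) (I.psi t.2.2) x

/-- the inverse of `τ[a,b,c,ψ]` -/
def tauOfInv (I : TDT α n) (t : α × α × α) (x : ℕ) : ℕ :=
  tauInvStep (I.psi t.1) (I.psi t.2.1) (I.psi t.2.2) x

end TDT

/-- a *variable*: a pair of triples `[(a,b,c),(x,y,z)]` -/
abbrev Var (α : Type*) : Type _ := (α × α × α) × (α × α × α)

section Main

variable {α : Type*} [DecidableEq α]

/-- The 3DT-step `I →(a,b,c) I'` (only defined when `(a,b,c)` is a
well-ordered triple of `T`): the triple is removed and `ψ` is composed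
with `τ[a,b,c,ψ]⁻¹`. -/
def StepT {n : ℕ} (t : α × α × α) (I I' : TDT α n) : Prop :=
  t ∈ I.T ∧ I.WellOrderedT t ∧
  I'.Sig = I.Sig \ trElems t ∧
  I'.T = I.T.erase t ∧
  ∀ σ ∈ I'.Sig, I'.psi σ = I.tauOfInv t (I.psi σ)

/-- `I` is 3DT-collapsible: some sequence of 3DT-steps reduces it to the
empty instance. -/
def Collapsible {n : ℕ} (I : TDT α n) : Prop :=
  ∃ J : TDT α n,
    Relation.ReflTransGen (fun X Y => ∃ t, StepT t X Y) I J ∧ J.Sig = ∅ ∧ J.T = ∅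

/-- `I ∼ π` : the 3DT-instance `I` (of span `n`) and the permutation `π` of
`{0,…,n}` are equivalent: `π 0 = 0`, `π v = π (v-1) + 1` for `v ∉ L`, and
`π v = π (succ_I⁻¹ v - 1) + 1` for `v ∈ L` (expressed triple by triple). -/
def EquivPerm {n : ℕ} (I : TDT α n) (π : ℕ → ℕ) : Prop :=
  π 0 = 0 ∧
  (∀ v, 1 ≤ v → v ≤ n → v ∉ I.dom → π v = π (v - 1) + 1) ∧
  ∀ t ∈ I.T,
    π (I.psi t.2.1) = π (I.psi t.1 - 1) + 1 ∧
    π (I.psi t.2.2) = π (I.psi t.2.1 - 1) + 1 ∧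
    π (I.psi t.1) = π (I.psi t.2.2 - 1) + 1

/-- `(s 1, …, s l)` is an `l`-block-decomposition of span `n` -/
def IsBlockDec (n l : ℕ) (s : ℕ → ℕ) : Prop :=
  s 1 = 0 ∧ (∀ h, 1 ≤ h → h < l → s h < s (h + 1)) ∧ s l < n

/-- `t_h`: the right end of block `h` (`t_h = s_{h+1}` for `h < l`, `t_l = n`) -/
def tEnd (n l : ℕ) (s : ℕ → ℕ) (h : ℕ) : ℕ := if h = l then n else s (h + 1)

/-- position `p` lies in block `h`, i.e. `p ∈ {s_h + 1, …, t_h}` -/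
def InBlock (n l : ℕ) (s : ℕ → ℕ) (h p : ℕ) : Prop := s h < p ∧ p ≤ tEnd n l s h

/-- a triple of `T` is *internal* (all three elements in one block) -/
def InternalT (n l : ℕ) (I : TDT α n) (s : ℕ → ℕ) (t : α × α × α) : Prop :=
  ∃ h, 1 ≤ h ∧ h ≤ l ∧ InBlock n l s h (I.psi t.1) ∧ InBlock n l s h (I.psi t.2.1) ∧
    InBlock n l s h (I.psi t.2.2)

/-- block conditions (C2)–(C3) of a variable `[(a,b,c),(x,y,z)]`:
`b,x,y` lie in the source block `h0` and `a,c,z` lie in the target block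
`h1 ≠ h0`. -/
def VarBlocksAt (n l : ℕ) (I : TDT α n) (s : ℕ → ℕ) (h0 h1 : ℕ) (a b c x y z : α) : Prop :=
  (a, b, c) ∈ I.T ∧ (x, y, z) ∈ I.T ∧
  1 ≤ h0 ∧ h0 ≤ l ∧ 1 ≤ h1 ∧ h1 ≤ l ∧ h1 ≠ h0 ∧
  InBlock n l s h0 (I.psi b) ∧ InBlock n l s h0 (I.psi x) ∧ InBlock n l s h0 (I.psi y) ∧
  InBlock n l s h1 (I.psi a) ∧ InBlock n l s h1 (I.psi c) ∧ InBlock n l s h1 (I.psi z)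

/-- the variable `[(a,b,c),(x,y,z)]` is *valid*, with source `h0` and target `h1`:
conditions (C2)–(C5). -/
def ValidVarAt (n l : ℕ) (I : TDT α n) (s : ℕ → ℕ) (h0 h1 : ℕ) (a b c x y z : α) : Prop :=
  VarBlocksAt n l I s h0 h1 a b c x y z ∧
  (I.psi x < I.psi y →
    I.psi x < I.psi b ∧ I.psi b < I.psi y ∧
      ∀ σ ∈ I.Sig, I.psi x < I.psi σ → I.psi σ < I.psi y → σ = b) ∧
  I.psi a < I.psi z ∧ I.psi z < I.psi c

/-- the variable `[(a,b,c),(x,y,z)]` is valid in the block decomposition `s` -/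
def ValidVar (n l : ℕ) (I : TDT α n) (s : ℕ → ℕ) (a b c x y z : α) : Prop :=
  ∃ h0 h1, ValidVarAt n l I s h0 h1 a b c x y z

/-- validity of a variable given as a pair of triples -/
def ValidVarV (n l : ℕ) (I : TDT α n) (s : ℕ → ℕ) (V : Var α) : Prop :=
  ValidVar n l I s V.1.1 V.1.2.1 V.1.2.2 V.2.1 V.2.2.1 V.2.2.2

/-- conditions (C2)–(C3) only, of a variable given as a pair of triples -/
def VarC23V (n l : ℕ) (I : TDT α n) (s : ℕ → ℕ) (V : Var α) : Prop :=
  ∃ h0 h1, VarBlocksAt n l I s h0 h1 V.1.1 V.1.2.1 V.1.2.2 V.2.1 V.2.2.1 V.2.2.2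

/-- the external triples of `(I,s)` are partitioned into the set `𝒜` of
variables, each satisfying the property `P`. -/
def PartitionIntoVars (n l : ℕ) (I : TDT α n) (s : ℕ → ℕ) (P : Var α → Prop)
    (𝒜 : Finset (Var α)) : Prop :=
  (∀ V ∈ 𝒜, P V) ∧
  (∀ V ∈ 𝒜, V.1 ≠ V.2) ∧
  (∀ V ∈ 𝒜, ∀ W ∈ 𝒜, V ≠ W → V.1 ≠ W.1 ∧ V.1 ≠ W.2 ∧ V.2 ≠ W.1 ∧ V.2 ≠ W.2) ∧
  (∀ V ∈ 𝒜, ¬ InternalT n l I s V.1 ∧ ¬ InternalT n l I s V.2) ∧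
  ∀ t ∈ I.T, ¬ InternalT n l I s t → ∃ V ∈ 𝒜, t = V.1 ∨ t = V.2

/-- `(I,s)` is a *valid context* -/
def ValidContext (n l : ℕ) (I : TDT α n) (s : ℕ → ℕ) : Prop :=
  IsBlockDec n l s ∧ ∃ 𝒜, PartitionIntoVars n l I s (ValidVarV n l I s) 𝒜

/-- a 3DT-step on an instance together with an `l`-block-decomposition:
`(I,B) →(t) (I',B')` with `B' = τ⁻¹[B]`. -/
def StepB (n l : ℕ) (t : α × α × α) (P P' : TDT α n × (ℕ → ℕ)) : Prop :=
  StepT t P.1 P'.1 ∧ IsBlockDec n l P'.2 ∧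
  ∀ h, 1 ≤ h → h ≤ l → P'.2 h = P.1.tauOfInv t (P.2 h)

/-- From the state `st`, the triple `v` (of some variable) can be activated,
possibly after some 3DT-steps using only the internal triples in `ints`. -/
def CanActivate (n l : ℕ) (ints : Set (α × α × α)) (v : α × α × α)
    (st : TDT α n × (ℕ → ℕ)) : Prop :=
  ∃ (m : ℕ) (c : ℕ → TDT α n × (ℕ → ℕ)) (tr : ℕ → α × α × α),
    c 0 = st ∧ (∀ p ≤ m, StepB n l (tr p) (c p) (c (p + 1))) ∧
    (∀ p < m, tr p ∈ ints) ∧ tr m = v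

/-- the block `h` of `(I,s)` reads (in increasing `ψ`-order) exactly as the
word `w`. -/
def BlockWord (n l : ℕ) (I : TDT α n) (s : ℕ → ℕ) (h : ℕ) (w : List α) : Prop :=
  w.Chain' (fun u v => I.psi u < I.psi v) ∧
  (∀ σ ∈ w, σ ∈ I.Sig ∧ InBlock n l s h (I.psi σ)) ∧
  ∀ σ ∈ I.Sig, InBlock n l s h (I.psi σ) → σ ∈ w

/-- the block `h` is the block `[A1,A2] = copy(A)`,
with word `a y1 e z d y2 x1 b1 c x2 b2 f`. -/
def IsCopyBlock (n l : ℕ) (I : TDT α n) (s : ℕ → ℕ) (h : ℕ) (A A1 A2 : Var α)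
    (d e f : α) : Prop :=
  (d, e, f) ∈ I.T ∧
  BlockWord n l I s h
    [A.1.1, A1.2.2.1, e, A.2.2.2, d, A2.2.2.1, A1.2.1, A1.1.2.1, A.1.2.2, A2.2.1, A2.1.2.1, f]

/-- the block `h` is the block `A = and(A1,A2)`,
with word `a1 e z1 a2 c1 z2 d y c2 x b f`. -/
def IsAndBlock (n l : ℕ) (I : TDT α n) (s : ℕ → ℕ) (h : ℕ) (A1 A2 A : Var α)
    (d e f : α) : Prop :=
  (d, e, f) ∈ I.T ∧
  BlockWord n l I s h
    [A1.1.1, e, A1.2.2.2, A2.1.1, A1.1.2.2, A2.2.2.2, d, A.2.2.1, A2.1.2.2, A.2.1, A.1.2.1, f]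

/-- the block `h` is the block `A = or(A1,A2)`,
with word `a1 b' z1 a2 d y a' x b f z2 c1 e c' c2`. -/
def IsOrBlock (n l : ℕ) (I : TDT α n) (s : ℕ → ℕ) (h : ℕ) (A1 A2 A : Var α)
    (a' b' c' d e f : α) : Prop :=
  (a', b', c') ∈ I.T ∧ (d, e, f) ∈ I.T ∧
  BlockWord n l I s h
    [A1.1.1, b', A1.2.2.2, A2.1.1, d, A.2.2.1, a', A.2.1, A.1.2.1, f, A2.2.2.2, A1.1.2.2, e,
      c', A2.1.2.2]

/-- the block `h` is the block `[A1,A2] = var(A)`,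
with word `d1 y1 a d2 y2 e1 a' e2 x1 b1 f1 c' z b' c x2 b2 f2`. -/
def IsVarBlock (n l : ℕ) (I : TDT α n) (s : ℕ → ℕ) (h : ℕ) (A A1 A2 : Var α)
    (d1 e1 f1 d2 e2 f2 a' b' c' : α) : Prop :=
  (d1, e1, f1) ∈ I.T ∧ (d2, e2, f2) ∈ I.T ∧ (a', b', c') ∈ I.T ∧
  BlockWord n l I s h
    [d1, A1.2.2.1, A.1.1, d2, A2.2.2.1, e1, a', e2, A1.2.1, A1.1.2.1, f1, c', A.2.2.2, b',
      A.1.2.2, A2.2.1, A2.1.2.1, f2]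

/-- `(I,s)` is an *assembling of basic blocks* over the set `𝒜` of variables:
the word representation of `I` is a concatenation of `l` blocks, each of one
of the four kinds `copy`, `and`, `or`, `var`; each variable is the input of
exactly one block and the output of exactly one other block, and `T`
consists of the internal triples of the blocks together with the triples of
the variables. -/
def IsAssembling (n l : ℕ) (I : TDT α n) (s : ℕ → ℕ) (𝒜 : Finset (Var α)) : Prop :=
  IsBlockDec n l s ∧
  (∀ V ∈ 𝒜, V.1 ∈ I.T ∧ V.2 ∈ I.T ∧ V.1 ≠ V.2) ∧
  (∀ V ∈ 𝒜, ∀ W ∈ 𝒜, V ≠ W → V.1 ≠ W.1 ∧ V.1 ≠ W.2 ∧ V.2 ≠ W.1 ∧ V.2 ≠ W.2) ∧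
  (∀ V ∈ 𝒜, ∃ h0 h1, VarBlocksAt n l I s h0 h1 V.1.1 V.1.2.1 V.1.2.2 V.2.1 V.2.2.1 V.2.2.2) ∧
  (∀ t ∈ I.T, InternalT n l I s t ∨ ∃ V ∈ 𝒜, t = V.1 ∨ t = V.2) ∧
  ∀ h, 1 ≤ h → h ≤ l →
    (∃ A ∈ 𝒜, ∃ A1 ∈ 𝒜, ∃ A2 ∈ 𝒜, ∃ d e f : α, IsCopyBlock n l I s h A A1 A2 d e f) ∨
    (∃ A ∈ 𝒜, ∃ A1 ∈ 𝒜, ∃ A2 ∈ 𝒜, ∃ d e f : α, IsAndBlock n l I s h A1 A2 A d e f) ∨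
    (∃ A ∈ 𝒜, ∃ A1 ∈ 𝒜, ∃ A2 ∈ 𝒜, ∃ a' b' c' d e f : α,
      IsOrBlock n l I s h A1 A2 A a' b' c' d e f) ∨
    (∃ A ∈ 𝒜, ∃ A1 ∈ 𝒜, ∃ A2 ∈ 𝒜, ∃ d1 e1 f1 d2 e2 f2 a' b' c' : α,
      IsVarBlock n l I s h A A1 A2 d1 e1 f1 d2 e2 f2 a' b' c')

end Main

/-- satisfiability of a boolean formula in CNF (clauses are lists of
literals; a literal is a pair (variable index, sign)) -/
def CNFSat (m : ℕ) (φ : List (List (Fin m × Bool))) : Prop :=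
  ∃ v : Fin m → Bool, ∀ C ∈ φ, ∃ p ∈ C, v p.1 = p.2

/-!
`τ_{i,j,k}⁻¹` moves `[j,k)` down onto `[i, i+k-j)` and `[i,j)` up onto `[i+k-j, k)`, fixing
everything else, so it is increasing on `[0,i) ∪ [j,k)` and on `[i,j) ∪ [k,∞)`: it inverts a
pair `a < b` only when `a ∈ [i,j)` and `b ∈ [j,k)`. For a block `(s_h, t_h]` this would put
`s_h` strictly inside `(s_{h0}, t_{h0}]` in the first case of the hypothesis, and `t_h`
strictly inside it in the second; but no boundary of a block decomposition lies strictly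
inside a block.
-/

theorem tauInv_lt_tauInv {i j k a b : ℕ} (hij : i ≤ j) (hjk : j ≤ k) (hab : a < b)
    (hcross : ¬(i ≤ a ∧ a < j ∧ j ≤ b ∧ b < k)) : tauInv i j k a < tauInv i j k b := by
  unfold tauInv tau
  split_ifs <;> omega

namespace IsBlockDec

variable {n l : ℕ} {s : ℕ → ℕ}

theorem lt_tEnd (hs : IsBlockDec n l s) {h : ℕ} (h1 : 1 ≤ h) (hl : h ≤ l) :
    s h < tEnd n l s h := by
  unfold tEnd
  split_ifs with hhl
  · exact hhl ▸ hs.2.2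
  · exact hs.2.1 h h1 (by omega)

theorem tEnd_le_of_lt (hs : IsBlockDec n l s) {h h' : ℕ} (h1 : 1 ≤ h) (hh' : h < h')
    (hl : h' ≤ l) : tEnd n l s h ≤ s h' := by
  induction h', hh' using Nat.le_induction with
  | base => simp [tEnd, show h ≠ l by omega]
  | succ m hm ih => exact (ih (by omega)).trans (hs.2.1 m (by omega) (by omega)).le

theorem tEnd_mono (hs : IsBlockDec n l s) {h h' : ℕ} (h1 : 1 ≤ h) (hh' : h ≤ h')
    (hl : h' ≤ l) : tEnd n l s h ≤ tEnd n l s h' := by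
  rcases hh'.eq_or_lt with rfl | hlt
  · rfl
  · exact (hs.tEnd_le_of_lt h1 hlt hl).trans (hs.lt_tEnd (by omega) hl).le

theorem s_mono (hs : IsBlockDec n l s) {h h' : ℕ} (h1 : 1 ≤ h) (hh' : h ≤ h')
    (hl : h' ≤ l) : s h ≤ s h' := by
  rcases hh'.eq_or_lt with rfl | hlt
  · rfl
  · exact (hs.lt_tEnd h1 (by omega)).le.trans (hs.tEnd_le_of_lt h1 hlt hl)

theorem s_notMem_Ioo (hs : IsBlockDec n l s) {h h₀ : ℕ} (h1 : 1 ≤ h) (hl : h ≤ l)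
    (h₀1 : 1 ≤ h₀) (h₀l : h₀ ≤ l) : s h ∉ Set.Ioo (s h₀) (tEnd n l s h₀) := by
  rintro ⟨hlo, hhi⟩
  rcases le_or_gt h h₀ with hle | hlt
  · exact (hs.s_mono h1 hle h₀l).not_gt hlo
  · exact (hs.tEnd_le_of_lt h₀1 hlt hl).not_gt hhi

theorem tEnd_notMem_Ioo (hs : IsBlockDec n l s) {h h₀ : ℕ} (h1 : 1 ≤ h) (hl : h ≤ l)
    (h₀1 : 1 ≤ h₀) (h₀l : h₀ ≤ l) :
    tEnd n l s h ∉ Set.Ioo (s h₀) (tEnd n l s h₀) := by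
  rintro ⟨hlo, hhi⟩
  rcases lt_or_ge h h₀ with hlt | hle
  · exact (hs.tEnd_le_of_lt h1 hlt h₀l).not_gt hlo
  · exact (hs.tEnd_mono h₀1 hle hl).not_gt hhi

end IsBlockDec

theorem stmt8_general (n l : ℕ) (s : ℕ → ℕ) (hbd : IsBlockDec n l s)
    (i j k : ℕ) (hij : i < j) (hjk : j < k)
    (h0 : ℕ) (hh01 : 1 ≤ h0) (hh0l : h0 ≤ l)
    (hcond : (s h0 < i ∧ j ≤ tEnd n l s h0) ∨ (s h0 < j ∧ k ≤ tEnd n l s h0)) :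
    ∀ h, 1 ≤ h → h ≤ l → tauInv i j k (s h) < tauInv i j k (tEnd n l s h) := by
  intro h h1 hl
  refine tauInv_lt_tauInv hij.le hjk.le (hbd.lt_tEnd h1 hl) ?_
  rintro ⟨his, hsj, hjt, htk⟩
  rcases hcond with ⟨hsi, hjt₀⟩ | ⟨hsj₀, hkt₀⟩
  · exact hbd.s_notMem_Ioo h1 hl hh01 hh0l ⟨by omega, by omega⟩
  · exact hbd.tEnd_notMem_Ioo h1 hl hh01 hh0l ⟨by omega, by omega⟩

/-- Property 9 of the paper.
Let `B = (s_1,…,s_l)` be an `l`-block-decomposition of a 3DT-instance of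
span `n`, and `i < j < k` in `{1,…,n}` such that for some block `h0`,
`s_{h0} < i < j ≤ t_{h0}` or `s_{h0} < j < k ≤ t_{h0}`. Then
`τ_{i,j,k}⁻¹(s_h) < τ_{i,j,k}⁻¹(t_h)` for every `h ∈ {1,…,l}`, so that the
`l`-block-decomposition `τ_{i,j,k}⁻¹[B]` is defined. -/
theorem stmt8 (n l : ℕ) (s : ℕ → ℕ) (hl : 1 ≤ l) (hbd : IsBlockDec n l s)
    (i j k : ℕ) (hi : 1 ≤ i) (hkn : k ≤ n) (hij : i < j) (hjk : j < k)
    (h0 : ℕ) (hh01 : 1 ≤ h0) (hh0l : h0 ≤ l)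
    (hcond : (s h0 < i ∧ j ≤ tEnd n l s h0) ∨ (s h0 < j ∧ k ≤ tEnd n l s h0)) :
    ∀ h, 1 ≤ h → h ≤ l → tauInv i j k (s h) < tauInv i j k (tEnd n l s h) :=
  stmt8_general n l s hbd i j k hij hjk h0 hh01 hh0l hcond
end

section
/- Let (I,B) be a 3DT-instance with an l-block-decomposition such that the external triples of I can be partitioned into a set 𝒜 of valid variables. Let (d,e,f) be a well-ordered triple of I admitting a 3DT-step (I,B) →(d,e,f) (I′,B′), with I′=⟨Σ′,T′,ψ′⟩. Then exactly one of the following holds: (1) (d,e,f) is internal with h0 = block(d)=block(e)=block(f); then block_{I′}(σ)=block_I(σ) for all σ∈Σ′, and for σ1,σ2∈Σ′ with block_{I′}(σ1)=block_{I′}(σ2)≠h0 and σ1≺_I σ2, also σ1≺_{I′}σ2. (2) There is A=[(a,b,c),(x,y,z)]∈𝒜 with (d,e,f)=(x,y,z); then block_{I′}(b)=target(A), block_{I′}(σ)=block_I(σ) for all σ∈Σ′∖{b}, and for σ1,σ2∈Σ′∖{b} with σ1≺_I σ2, also σ1≺_{I′}σ2. -/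
/- ----------------------------------------------------------------------
  Common definitions for the formalization of
  "Sorting by Transpositions is Difficult" (Bulteau, Fertin, Rusu).

  Permutations of {0,…,n} are represented as functions ℕ → ℕ that are
  bijections of the set {0,…,n} (everything above n is irrelevant /
  fixed).
---------------------------------------------------------------------- -/

set_option autoImplicit false

/-! The inverse transposition `τ[d,e,f,ψ]⁻¹` fixes every position outside the interval spanned
by `ψ d, ψ e, ψ f` and permutes that interval. If `(d,e,f)` lies in block `h0`, every block
boundary is therefore fixed and block `h0` is mapped onto itself.

Otherwise `(d,e,f)` belongs to a valid variable `[(a,b,c),(x,y,z)]`. It cannot be `(a,b,c)`: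
`b` lies in another block than `a ≺ z ≺ c`, so `(a,b,c)` is not well-ordered. Hence
`(d,e,f) = (x,y,z)`; the blocks force `x ≺ y`, and the step swaps the window `[ψ x, ψ y)`,
whose only survivor is `b`, with the adjacent segment up to `ψ z`. Off this window the step is
order-preserving, so all block boundaries and all elements other than `b` keep their relative
order, while `b` is carried next to `z`, into the target block. -/

section Transposition

variable {i j k a c x : ℕ}

lemma tauInv_eq_self_of_lt (hx : x < i) : tauInv i j k x = x := by
  simp only [tauInv, tau, if_pos hx]

lemma tauInv_eq_self_of_le (hij : i ≤ j) (hjk : j ≤ k) (hx : k ≤ x) : tauInv i j k x = x := by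
  unfold tauInv tau
  split_ifs <;> omega

lemma tauInv_mem_Ico (hij : i ≤ j) (hjk : j ≤ k) (hx : i ≤ x) (hx' : x < k) :
    i ≤ tauInv i j k x ∧ tauInv i j k x < k := by
  unfold tauInv tau
  split_ifs <;> omega

lemma tauInv_strictMonoOn_left (hij : i < j) (hjk : j < k) :
    StrictMonoOn (tauInv i j k) {x | x < i ∨ j ≤ x} := by
  intro x hx y hy hxy
  simp only [Set.mem_ofPred_eq] at hx hy
  unfold tauInv tau
  split_ifs <;> omega

lemma tauInv_strictMonoOn_right (hij : i < j) (hjk : j < k) :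
    StrictMonoOn (tauInv i j k) {x | x < j ∨ k ≤ x} := by
  intro x hx y hy hxy
  simp only [Set.mem_ofPred_eq] at hx hy
  unfold tauInv tau
  split_ifs <;> omega

lemma tauInv_between_left (hix : i < x) (hxj : x < j) (hja : j ≤ a) (hak : a < k)
    (hkc : k ≤ c) :
    tauInv i j k a < tauInv i j k x ∧ tauInv i j k x < tauInv i j k c := by
  unfold tauInv tau
  split_ifs <;> omega

lemma tauInv_between_right (hjx : j < x) (hxk : x < k) (hai : a < i) (hic : i ≤ c) (hcj : c < j) :
    tauInv i j k a < tauInv i j k x ∧ tauInv i j k x < tauInv i j k c := by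
  unfold tauInv tau
  split_ifs <;> omega

end Transposition

section Step

variable {p q r u v a c x : ℕ}

lemma min3_le_mid3 : min3 p q r ≤ mid3 p q r := by
  unfold mid3 min3 max3; omega

lemma mid3_le_max3 : mid3 p q r ≤ max3 p q r := by
  unfold mid3 min3 max3; omega

lemma tauInvStep_eq_tauInv (hpq : p < q) (hqr : q < r) : tauInvStep p q r = tauInv p q r := by
  funext x
  simp only [tauInvStep, mid3, min3, max3]
  congr 1 <;> omega

lemma tauInvStep_eq_tauInv_rotate (hrp : r < p) (hpq : p < q) :
    tauInvStep p q r = tauInv r p q := by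
  funext x
  simp only [tauInvStep, mid3, min3, max3]
  congr 1 <;> omega

lemma tauInvStep_eq_self (hp : u < p ∧ p ≤ v) (hq : u < q ∧ q ≤ v) (hr : u < r ∧ r ≤ v)
    (hx : x ≤ u ∨ v ≤ x) : tauInvStep p q r x = x := by
  unfold tauInvStep
  rcases hx with hx | hx
  · exact tauInv_eq_self_of_lt (by unfold min3; omega)
  · exact tauInv_eq_self_of_le min3_le_mid3 mid3_le_max3 (by unfold max3; omega)

lemma tauInvStep_mem_Ioo (hp : u < p ∧ p ≤ v) (hq : u < q ∧ q ≤ v) (hr : u < r ∧ r ≤ v)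
    (hx : u < x ∧ x < v) : u < tauInvStep p q r x ∧ tauInvStep p q r x < v := by
  have hu : u < min3 p q r := by unfold min3; omega
  have hv : max3 p q r ≤ v := by unfold max3; omega
  unfold tauInvStep
  rcases lt_or_ge x (min3 p q r) with hlt | hge
  · rwa [tauInv_eq_self_of_lt hlt]
  rcases lt_or_ge x (max3 p q r) with hlt' | hge'
  · have := tauInv_mem_Ico min3_le_mid3 mid3_le_max3 hge hlt'
    omega
  · rwa [tauInv_eq_self_of_le min3_le_mid3 mid3_le_max3 hge']

lemma tauInvStep_mem_Ioc_iff (hp : u < p ∧ p ≤ v) (hq : u < q ∧ q ≤ v)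
    (hr : u < r ∧ r ≤ v) (ha : a ≤ u ∨ v ≤ a) (hc : c ≤ u ∨ v ≤ c) :
    tauInvStep p q r x ∈ Set.Ioc (tauInvStep p q r a) (tauInvStep p q r c) ↔
      x ∈ Set.Ioc a c := by
  rw [Set.mem_Ioc, Set.mem_Ioc, tauInvStep_eq_self hp hq hr ha, tauInvStep_eq_self hp hq hr hc]
  by_cases hx : x ≤ u ∨ v ≤ x
  · rw [tauInvStep_eq_self hp hq hr hx]
  · have := tauInvStep_mem_Ioo hp hq hr (x := x) (by omega)
    omega

namespace WellOrdered3

lemma lt_of_same_side (hw : WellOrdered3 p q r) (hside : p < r ∧ q < r ∨ r < p ∧ r < q) :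
    p < q := by
  unfold WellOrdered3 at hw; omega

lemma tauInvStep_strictMonoOn (hw : WellOrdered3 p q r) (hpq : p < q) :
    StrictMonoOn (tauInvStep p q r) {x | x < p ∨ q ≤ x} := by
  rcases hw with ⟨-, hqr⟩ | ⟨hqr, hrp⟩ | ⟨hrp, -⟩
  · rw [tauInvStep_eq_tauInv hpq hqr]
    exact tauInv_strictMonoOn_left hpq hqr
  · omega
  · rw [tauInvStep_eq_tauInv_rotate hrp hpq]
    exact tauInv_strictMonoOn_right hrp hpq

lemma tauInvStep_between (hw : WellOrdered3 p q r) (hpx : p < x) (hxq : x < q) (har : a < r)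
    (hrc : r ≤ c) (hside : q ≤ a ∨ c < p) :
    tauInvStep p q r a < tauInvStep p q r x ∧ tauInvStep p q r x < tauInvStep p q r c := by
  rcases hw with ⟨-, hqr⟩ | ⟨hqr, hrp⟩ | ⟨hrp, -⟩
  · rw [tauInvStep_eq_tauInv (hpx.trans hxq) hqr]
    exact tauInv_between_left hpx hxq (by omega) har hrc
  · omega
  · rw [tauInvStep_eq_tauInv_rotate hrp (hpx.trans hxq)]
    exact tauInv_between_right hpx hxq har hrc (by omega)

end WellOrdered3

lemma not_wellOrdered3 (hpr : p < r) (hq : q < p ∧ q < r ∨ p < q ∧ r < q) :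
    ¬ WellOrdered3 p q r := by
  unfold WellOrdered3; omega

end Step

namespace IsBlockDec

variable {n l : ℕ} {s : ℕ → ℕ}

lemma s_mono_s10 (hbd : IsBlockDec n l s) {a b : ℕ} (ha : 1 ≤ a) (hab : a ≤ b) (hb : b ≤ l) :
    s a ≤ s b := by
  induction b, hab using Nat.le_induction with
  | base => rfl
  | succ b hab ih => exact (ih (by omega)).trans (hbd.2.1 b (by omega) (by omega)).le

lemma s_lt_tEnd (hbd : IsBlockDec n l s) {h : ℕ} (hh : 1 ≤ h) (hhl : h ≤ l) :
    s h < tEnd n l s h := by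
  unfold tEnd
  split_ifs with hl
  · exact (hbd.s_mono_s10 hh hhl le_rfl).trans_lt (hl ▸ hbd.2.2)
  · exact hbd.2.1 h hh (by omega)

lemma tEnd_le_s (hbd : IsBlockDec n l s) {h h' : ℕ} (hh : 1 ≤ h) (hlt : h < h')
    (hh'l : h' ≤ l) :
    tEnd n l s h ≤ s h' := by
  rw [tEnd, if_neg (by omega)]
  exact hbd.s_mono_s10 (by omega) hlt hh'l

lemma tEnd_le_s_or_tEnd_le_s (hbd : IsBlockDec n l s) {h h' : ℕ} (hh : 1 ≤ h) (hhl : h ≤ l)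
    (hh' : 1 ≤ h') (hh'l : h' ≤ l) (hne : h ≠ h') :
    tEnd n l s h ≤ s h' ∨ tEnd n l s h' ≤ s h := by
  rcases Nat.lt_or_gt_of_ne hne with hlt | hlt
  · exact .inl (hbd.tEnd_le_s hh hlt hh'l)
  · exact .inr (hbd.tEnd_le_s hh' hlt hhl)

lemma le_or_le_of_inBlock (hbd : IsBlockDec n l s) {h h' p : ℕ} (hh : 1 ≤ h) (hhl : h ≤ l)
    (hh' : 1 ≤ h') (hh'l : h' ≤ l) (hne : h ≠ h') (hp : InBlock n l s h' p) :
    p ≤ s h ∨ tEnd n l s h ≤ p := by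
  unfold InBlock at hp
  rcases hbd.tEnd_le_s_or_tEnd_le_s hh hhl hh' hh'l hne with hle | hle <;> omega

lemma boundaries_le_or_le (hbd : IsBlockDec n l s) {h h' : ℕ} (hh : 1 ≤ h) (hhl : h ≤ l)
    (hh' : 1 ≤ h') (hh'l : h' ≤ l) :
    (s h' ≤ s h ∨ tEnd n l s h ≤ s h') ∧
      (tEnd n l s h' ≤ s h ∨ tEnd n l s h ≤ tEnd n l s h') := by
  rcases eq_or_ne h h' with rfl | hne
  · omega
  have := hbd.s_lt_tEnd hh' hh'l
  rcases hbd.tEnd_le_s_or_tEnd_le_s hh hhl hh' hh'l hne with hle | hle <;> omega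

end IsBlockDec

namespace StepB

variable {α : Type*} [DecidableEq α] {n l : ℕ} {t : α × α × α} {I I' : TDT α n}
  {s s' : ℕ → ℕ}

lemma mem_sig (hstep : StepB n l t (I, s) (I', s')) {σ : α} :
    σ ∈ I'.Sig ↔ σ ∈ I.Sig ∧ σ ∉ trElems t := by
  rw [hstep.1.2.2.1, Finset.mem_sdiff]

lemma psi_eq (hstep : StepB n l t (I, s) (I', s')) {σ : α} (hσ : σ ∈ I'.Sig) :
    I'.psi σ = I.tauOfInv t (I.psi σ) :=
  hstep.1.2.2.2.2 σ hσ

lemma s_eq (hstep : StepB n l t (I, s) (I', s')) {h : ℕ} (hh : 1 ≤ h) (hhl : h ≤ l) :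
    s' h = I.tauOfInv t (s h) :=
  hstep.2.2 h hh hhl

lemma tauOfInv_span_eq (hstep : StepB n l t (I, s) (I', s')) : I.tauOfInv t n = n := by
  obtain ⟨h1, h2, h3⟩ := I.mem_T t hstep.1.1
  have hpos : ∀ σ ∈ I.Sig, 0 < I.psi σ ∧ I.psi σ ≤ n := fun σ hσ => by
    have := I.psi_mem σ hσ
    rw [Finset.mem_Icc] at this
    omega
  exact tauInvStep_eq_self (hpos _ h1) (hpos _ h2) (hpos _ h3) (.inr le_rfl)

lemma inBlock_iff (hstep : StepB n l t (I, s) (I', s')) {h : ℕ} (hh : 1 ≤ h) (hhl : h ≤ l)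
    (w : ℕ) :
    InBlock n l s' h (I.tauOfInv t w) ↔
      I.tauOfInv t (s h) < I.tauOfInv t w ∧ I.tauOfInv t w ≤ I.tauOfInv t (tEnd n l s h) := by
  have htEnd : tEnd n l s' h = I.tauOfInv t (tEnd n l s h) := by
    unfold tEnd
    split_ifs with hl
    · exact hstep.tauOfInv_span_eq.symm
    · exact hstep.s_eq (by omega) (by omega)
  rw [InBlock, htEnd, hstep.s_eq hh hhl]

end StepB

section Cases

variable {α : Type*} [DecidableEq α] {n l : ℕ} {I I' : TDT α n} {s s' : ℕ → ℕ}

theorem StepB.blocks_of_internal (hbd : IsBlockDec n l s) {t : α × α × α}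
    (hstep : StepB n l t (I, s) (I', s')) {h0 : ℕ} (hh0 : 1 ≤ h0) (hh0l : h0 ≤ l)
    (h1 : InBlock n l s h0 (I.psi t.1)) (h2 : InBlock n l s h0 (I.psi t.2.1))
    (h3 : InBlock n l s h0 (I.psi t.2.2)) :
    (∀ σ ∈ I'.Sig, ∀ h, 1 ≤ h → h ≤ l →
      (InBlock n l s' h (I'.psi σ) ↔ InBlock n l s h (I.psi σ))) ∧
    (∀ σ1 ∈ I'.Sig, ∀ σ2 ∈ I'.Sig, ∀ h, 1 ≤ h → h ≤ l → h ≠ h0 →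
      InBlock n l s' h (I'.psi σ1) → InBlock n l s' h (I'.psi σ2) →
      I.psi σ1 < I.psi σ2 → I'.psi σ1 < I'.psi σ2) := by
  have hblock : ∀ σ ∈ I'.Sig, ∀ h, 1 ≤ h → h ≤ l →
      (InBlock n l s' h (I'.psi σ) ↔ InBlock n l s h (I.psi σ)) := by
    intro σ hσ h hh hhl
    obtain ⟨hs, ht⟩ := hbd.boundaries_le_or_le hh0 hh0l hh hhl
    rw [hstep.psi_eq hσ, hstep.inBlock_iff hh hhl]
    exact tauInvStep_mem_Ioc_iff h1 h2 h3 hs ht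
  have hfixed : ∀ σ ∈ I'.Sig, ∀ h, 1 ≤ h → h ≤ l → h ≠ h0 →
      InBlock n l s' h (I'.psi σ) → I'.psi σ = I.psi σ := by
    intro σ hσ h hh hhl hne hin
    rw [hstep.psi_eq hσ]
    exact tauInvStep_eq_self h1 h2 h3
      (hbd.le_or_le_of_inBlock hh0 hh0l hh hhl hne.symm ((hblock σ hσ h hh hhl).1 hin))
  refine ⟨hblock, fun σ1 hσ1 σ2 hσ2 h hh hhl hne hin1 hin2 hlt => ?_⟩
  rwa [hfixed σ1 hσ1 h hh hhl hne hin1, hfixed σ2 hσ2 h hh hhl hne hin2]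

theorem ValidVarAt.not_wellOrderedT (hbd : IsBlockDec n l s) {a b c x y z : α} {h0 h1 : ℕ}
    (hV : ValidVarAt n l I s h0 h1 a b c x y z) : ¬ I.WellOrderedT (a, b, c) := by
  obtain ⟨⟨-, -, hh0, hh0l, hh1, hh1l, hne, hb, -, -, ha, hc, -⟩, -, haz, hzc⟩ := hV
  have hsep := hbd.tEnd_le_s_or_tEnd_le_s hh0 hh0l hh1 hh1l hne.symm
  unfold InBlock at hb ha hc
  show ¬ WellOrdered3 (I.psi a) (I.psi b) (I.psi c)
  exact not_wellOrdered3 (haz.trans hzc) (by omega)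

theorem StepB.blocks_of_validVarAt (hbd : IsBlockDec n l s) {a b c x y z : α} {h0 h1 : ℕ}
    (hstep : StepB n l (x, y, z) (I, s) (I', s'))
    (hV : ValidVarAt n l I s h0 h1 a b c x y z) (hne : (a, b, c) ≠ (x, y, z)) :
    InBlock n l s' h1 (I'.psi b) ∧
    (∀ σ ∈ I'.Sig, σ ≠ b → ∀ h, 1 ≤ h → h ≤ l →
      (InBlock n l s' h (I'.psi σ) ↔ InBlock n l s h (I.psi σ))) ∧
    (∀ σ1 ∈ I'.Sig, ∀ σ2 ∈ I'.Sig, σ1 ≠ b → σ2 ≠ b →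
      I.psi σ1 < I.psi σ2 → I'.psi σ1 < I'.psi σ2) := by
  obtain ⟨⟨habc, hxyz, hh0, hh0l, hh1, hh1l, hne01, hb, hx, hy, -, -, hz⟩, hC4, -⟩ := hV
  have hwo : WellOrdered3 (I.psi x) (I.psi y) (I.psi z) := hstep.1.2.1
  have hsep := hbd.tEnd_le_s_or_tEnd_le_s hh0 hh0l hh1 hh1l hne01.symm
  unfold InBlock at hb hx hy hz
  have hxy : I.psi x < I.psi y := hwo.lt_of_same_side (by omega)
  obtain ⟨hxb, hby, hbetween⟩ := hC4 hxy
  set W : Set ℕ := {p | p < I.psi x ∨ I.psi y ≤ p}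
  have hmono : StrictMonoOn (I.tauOfInv (x, y, z)) W := hwo.tauInvStep_strictMonoOn hxy
  have hW : ∀ σ ∈ I'.Sig, σ ≠ b → I.psi σ ∈ W := by
    intro σ hσ hσb
    obtain ⟨hσ, hσt⟩ := hstep.mem_sig.1 hσ
    have hσx : I.psi σ ≠ I.psi x := fun heq =>
      hσt (by rw [I.psi_inj hσ (I.mem_T _ hxyz).1 heq]; simp [trElems])
    by_contra hσW
    simp only [W, Set.mem_ofPred_eq] at hσW
    exact hσb (hbetween σ hσ (by omega) (by omega))
  have hbdry : ∀ h, 1 ≤ h → h ≤ l → s h ∈ W ∧ tEnd n l s h ∈ W := by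
    intro h hh hhl
    have := hbd.boundaries_le_or_le hh0 hh0l hh hhl
    simp only [W, Set.mem_ofPred_eq]
    omega
  have hbS : b ∈ I'.Sig := hstep.mem_sig.2 ⟨(I.mem_T _ habc).2.1,
    Finset.disjoint_left.1 (I.disj_T _ habc _ hxyz hne) (by simp [trElems])⟩
  refine ⟨?_, fun σ hσ hσb h hh hhl => ?_, fun σ1 hσ1 σ2 hσ2 hσ1b hσ2b hlt => ?_⟩
  · rw [hstep.psi_eq hbS, hstep.inBlock_iff hh1 hh1l]
    have := hwo.tauInvStep_between hxb hby (a := s h1) (c := tEnd n l s h1)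
      (by omega) (by omega) (by omega)
    exact ⟨this.1, this.2.le⟩
  · obtain ⟨hs, ht⟩ := hbdry h hh hhl
    rw [hstep.psi_eq hσ, hstep.inBlock_iff hh hhl, InBlock,
      hmono.lt_iff_lt hs (hW σ hσ hσb), hmono.le_iff_le (hW σ hσ hσb) ht]
  · rw [hstep.psi_eq hσ1, hstep.psi_eq hσ2]
    exact hmono (hW σ1 hσ1 hσ1b) (hW σ2 hσ2 hσ2b) hlt

end Cases

/-- Property 11 of the paper.
Let `(I,B)` be a 3DT-instance with an `l`-block-decomposition whose external
triples are partitioned into a set `𝒜` of valid variables, and let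
`(d,e,f)` be a well-ordered triple of `I` admitting a 3DT-step
`(I,B) →(d,e,f) (I',B')`. Then exactly one of the following holds:
(1) `(d,e,f)` is internal, in block `h0`; all remaining elements keep their
block, and the relative order of elements in a common block `≠ h0` is kept;
(2) `(d,e,f) = (x,y,z)` for some variable `A = [(a,b,c),(x,y,z)] ∈ 𝒜`;
then `b` moves to `target(A)`, all other elements keep their block, and any
two remaining elements other than `b` keep their relative order. -/
theorem stmt10 {α : Type*} [DecidableEq α] {n : ℕ} (l : ℕ)
    (I I' : TDT α n) (s s' : ℕ → ℕ)
    (hbd : IsBlockDec n l s) (𝒜 : Finset (Var α))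
    (hpart : PartitionIntoVars n l I s (ValidVarV n l I s) 𝒜)
    (d e f : α)
    (hstep : StepB n l (d, e, f) (I, s) (I', s')) :
    Xor'
      (InternalT n l I s (d, e, f) ∧
        ∃ h0, 1 ≤ h0 ∧ h0 ≤ l ∧
          InBlock n l s h0 (I.psi d) ∧ InBlock n l s h0 (I.psi e) ∧
          InBlock n l s h0 (I.psi f) ∧
          (∀ σ ∈ I'.Sig, ∀ h, 1 ≤ h → h ≤ l →
            (InBlock n l s' h (I'.psi σ) ↔ InBlock n l s h (I.psi σ))) ∧
          (∀ σ1 ∈ I'.Sig, ∀ σ2 ∈ I'.Sig, ∀ h, 1 ≤ h → h ≤ l → h ≠ h0 →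
            InBlock n l s' h (I'.psi σ1) → InBlock n l s' h (I'.psi σ2) →
            I.psi σ1 < I.psi σ2 → I'.psi σ1 < I'.psi σ2))
      (∃ V ∈ 𝒜, (d, e, f) = V.2 ∧
        (∃ h1, 1 ≤ h1 ∧ h1 ≤ l ∧
          InBlock n l s h1 (I.psi V.1.1) ∧ InBlock n l s h1 (I.psi V.1.2.2) ∧
          InBlock n l s h1 (I.psi V.2.2.2) ∧
          InBlock n l s' h1 (I'.psi V.1.2.1)) ∧
        (∀ σ ∈ I'.Sig, σ ≠ V.1.2.1 → ∀ h, 1 ≤ h → h ≤ l →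
          (InBlock n l s' h (I'.psi σ) ↔ InBlock n l s h (I.psi σ))) ∧
        (∀ σ1 ∈ I'.Sig, ∀ σ2 ∈ I'.Sig, σ1 ≠ V.1.2.1 → σ2 ≠ V.1.2.1 →
          I.psi σ1 < I.psi σ2 → I'.psi σ1 < I'.psi σ2)) := by
  obtain ⟨hvalid, hne, -, hext, hcover⟩ := hpart
  by_cases hint : InternalT n l I s (d, e, f)
  · refine .inl ⟨⟨hint, ?_⟩, fun ⟨V, hV, hdef, _⟩ => (hext V hV).2 (hdef ▸ hint)⟩
    obtain ⟨h0, hh0, hh0l, hd, he, hf⟩ := hint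
    exact ⟨h0, hh0, hh0l, hd, he, hf, hstep.blocks_of_internal hbd hh0 hh0l hd he hf⟩
  · refine .inr ⟨?_, fun h => hint h.1⟩
    obtain ⟨⟨⟨a, b, c⟩, x, y, z⟩, hV, hdef | hdef⟩ := hcover _ hstep.1.1 hint
    · obtain ⟨h0, h1, hVA⟩ := hvalid _ hV
      exact absurd (hdef ▸ hstep.1.2.1) (hVA.not_wellOrderedT hbd)
    · obtain ⟨rfl, rfl, rfl⟩ : d = x ∧ e = y ∧ f = z := by simpa using hdef
      obtain ⟨h0, h1, hVA⟩ := hvalid _ hV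
      obtain ⟨hb', hblock, hmono⟩ := hstep.blocks_of_validVarAt hbd hVA (hne _ hV)
      obtain ⟨⟨-, -, -, -, hh1, hh1l, -, -, -, -, ha, hc, hz⟩, -⟩ := hVA
      exact ⟨_, hV, rfl, ⟨h1, hh1, hh1l, ha, hc, hz, hb'⟩, hblock, hmono⟩
end
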